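/- arXiv:2009.07766 — 2 statements merged into one kernel-verified Lean document; each statement's English description precedes it below -/
import Mathlib

section
/- Let σ(x₁,…,xₙ) = 0 be a homogeneous polynomial system partition regular on ℝ⁺. Then every set A that is piecewise syndetic in ((0,1),·) contains a solution to σ = 0. -/
open Set MvPolynomial

attribute [local instance] Ultrafilter.mul

/-- `βT`: ultrafilters on `ℝ` concentrated on `T`. -/
def beta (T : Set ℝ) : Set (Ultrafilter ℝ) := {U | T ∈ U}

/-- `0⁺(S)`: ultrafilters on `S` containing every `(0, ε) ∩ S`. -/
def zeroPlus (S : Set ℝ) : Set (Ultrafilter ℝ) :=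
  {U | S ∈ U ∧ ∀ ε : ℝ, 0 < ε → Ioo 0 ε ∩ S ∈ U}

/-- `I` is a (nonempty) two-sided ideal of `(βT, ⊙)`. -/
def IsIdealIn (T : Set ℝ) (I : Set (Ultrafilter ℝ)) : Prop :=
  I.Nonempty ∧ I ⊆ beta T ∧
    ∀ U ∈ I, ∀ V ∈ beta T, U * V ∈ I ∧ V * U ∈ I

/-- `K(βT, ⊙)`: the smallest two-sided ideal, i.e. the intersection of all of them. -/
def K (T : Set ℝ) : Set (Ultrafilter ℝ) := ⋂₀ {I | IsIdealIn T I}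

/-- `S` is a subsemigroup of `((0,1), ·)`. -/
def IsUnitSubsemigroup (S : Set ℝ) : Prop :=
  S.Nonempty ∧ S ⊆ Ioo 0 1 ∧ ∀ a ∈ S, ∀ b ∈ S, a * b ∈ S

/-- The system `σ = 0` has a solution with all entries in `A`. -/
def SolvableIn {n m : ℕ} (σ : Fin m → MvPolynomial (Fin n) ℝ) (A : Set ℝ) : Prop :=
  ∃ a : Fin n → ℝ, (∀ i, a i ∈ A) ∧ ∀ j, eval a (σ j) = 0

/-- The system `σ = 0` is partition regular on `S`. -/
def PartRegOn {n m : ℕ} (σ : Fin m → MvPolynomial (Fin n) ℝ) (S : Set ℝ) : Prop :=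
  ∀ (k : ℕ) (c : ℝ → Fin k), ∃ j : Fin k, SolvableIn σ {x ∈ S | c x = j}

/-- The system `σ = 0` is partition regular near zero on `S`. -/
def PartRegNearZero {n m : ℕ} (σ : Fin m → MvPolynomial (Fin n) ℝ) (S : Set ℝ) : Prop :=
  ∀ ε : ℝ, 0 < ε → ∀ (k : ℕ) (c : ℝ → Fin k),
    ∃ j : Fin k, SolvableIn σ ({x ∈ S | c x = j} ∩ Ioo 0 ε)

/-- `U` is a `ι_σ`-ultrafilter: every member of `U` contains a solution of `σ = 0`. -/
def IotaUltra {n m : ℕ} (σ : Fin m → MvPolynomial (Fin n) ℝ) (U : Ultrafilter ℝ) : Prop :=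
  ∀ A ∈ U, SolvableIn σ A

/-- `A` is piecewise syndetic in the semigroup `(T, ·)`. -/
def PiecewiseSyndeticIn (T A : Set ℝ) : Prop :=
  ∃ G : Finset ℝ, (G : Set ℝ) ⊆ T ∧ ∀ F : Finset ℝ, (F : Set ℝ) ⊆ T →
    ∃ x ∈ T, ∀ f ∈ F, ∃ g ∈ G, g * (f * x) ∈ A

/-- `S` is a `ℚ`-infinitesimal semigroup. -/
def QInfinitesimal (S : Set ℝ) : Prop :=
  S ⊆ Ioo 0 1 ∧ (∀ a ∈ S, ∀ b ∈ S, a * b ∈ S) ∧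
    ∀ s ∈ S, ∀ q : ℚ, 0 < q → (q : ℝ) * s < 1 → (q : ℝ) * s ∈ S

/-- `T` is an HL-semigroup. -/
def IsHLSemigroup (T : Set ℝ) : Prop :=
  T ⊆ Ioi 0 ∧ (∀ x ∈ T, ∀ y ∈ T, x + y ∈ T) ∧
    (∀ a b : ℝ, 0 < a → a < b → ∃ t ∈ T, a < t ∧ t < b) ∧
    (∀ x ∈ T ∩ Ioo 0 1, ∀ y ∈ T ∩ Ioo 0 1, x * y ∈ T ∩ Ioo 0 1) ∧
    (∀ y ∈ T ∩ Ioo 0 1, ∀ x ∈ T, x / y ∈ T ∧ y * x ∈ T)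

/-- The positive rationals, as a subset of `ℝ`. -/
def Qpos : Set ℝ := {x | 0 < x ∧ ∃ q : ℚ, x = (q : ℝ)}

/-- The system `σ = 0` is homogeneous: solutions are invariant under nonzero scaling. -/
def Homogeneous {n m : ℕ} (σ : Fin m → MvPolynomial (Fin n) ℝ) : Prop :=
  ∀ a : ℝ, a ≠ 0 → ∀ b : Fin n → ℝ,
    ((∀ j, eval b (σ j) = 0) ↔ ∀ j, eval (fun i => a * b i) (σ j) = 0)


section AuxLemmas

open Filter

lemma solvableIn_mono {n m : ℕ} {σ : Fin m → MvPolynomial (Fin n) ℝ} {A B : Set ℝ}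
    (h : A ⊆ B) : SolvableIn σ A → SolvableIn σ B :=
  fun ⟨a, ha, hs⟩ => ⟨a, fun i => h (ha i), hs⟩

/-- Auxiliary partition-regularity predicate on an arbitrary set. -/
def PRon {n m : ℕ} (σ : Fin m → MvPolynomial (Fin n) ℝ) (S : Set ℝ) : Prop :=
  ∀ (k : ℕ) (c : ℝ → Fin k), ∃ j : Fin k, SolvableIn σ {x ∈ S | c x = j}

lemma PRon_mono {n m : ℕ} {σ : Fin m → MvPolynomial (Fin n) ℝ} {S S' : Set ℝ}
    (h : S ⊆ S') : PRon σ S → PRon σ S' := by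
  intro hp k c
  obtain ⟨j, hj⟩ := hp k c
  exact ⟨j, solvableIn_mono (fun x hx => ⟨h hx.1, hx.2⟩) hj⟩

lemma PRon_union {n m : ℕ} {σ : Fin m → MvPolynomial (Fin n) ℝ} {X Y : Set ℝ}
    (h : PRon σ (X ∪ Y)) : PRon σ X ∨ PRon σ Y := by
  classical
  by_contra hc
  push_neg at hc
  obtain ⟨hX, hY⟩ := hc
  rw [PRon] at hX hY
  push_neg at hX hY
  obtain ⟨k₁, c₁, h₁⟩ := hX
  obtain ⟨k₂, c₂, h₂⟩ := hY
  obtain ⟨j, hj⟩ := h (k₁ + k₂)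
    (fun x => if x ∈ X then Fin.castAdd k₂ (c₁ x) else Fin.natAdd k₁ (c₂ x))
  by_cases hlt : (j : ℕ) < k₁
  · refine h₁ ⟨j, hlt⟩ (solvableIn_mono ?_ hj)
    rintro x ⟨hxy, hcx⟩
    by_cases hx : x ∈ X
    · refine ⟨hx, ?_⟩
      rw [if_pos hx] at hcx
      have h' := congrArg Fin.val hcx
      simp at h'
      exact Fin.ext (by simpa using h')
    · rw [if_neg hx] at hcx
      have h' := congrArg Fin.val hcx
      simp [Fin.natAdd] at h'
      omega
  · have hjlt := j.isLt
    refine h₂ ⟨(j : ℕ) - k₁, by omega⟩ (solvableIn_mono ?_ hj)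
    rintro x ⟨hxy, hcx⟩
    by_cases hx : x ∈ X
    · rw [if_pos hx] at hcx
      have h' := congrArg Fin.val hcx
      simp [Fin.castAdd] at h'
      have := (c₁ x).isLt
      omega
    · refine ⟨hxy.resolve_left hx, ?_⟩
      rw [if_neg hx] at hcx
      have h' := congrArg Fin.val hcx
      simp [Fin.natAdd] at h'
      exact Fin.ext (by simp; omega)

lemma iota_mul {n m : ℕ} {σ : Fin m → MvPolynomial (Fin n) ℝ} (hhom : Homogeneous σ)
    {U V : Ultrafilter ℝ} (hU : IotaUltra σ U) (hV : Ioi (0:ℝ) ∈ V) :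
    IotaUltra σ (U * V) := by
  intro A hA
  have hA' : {x : ℝ | {y : ℝ | x * y ∈ A} ∈ V} ∈ U :=
    (Ultrafilter.eventually_mul U V (· ∈ A)).1 hA
  obtain ⟨a, ha, hs⟩ := hU _ hA'
  have key : (Ioi 0 ∩ ⋂ i, {y | a i * y ∈ A}) ∈ (V : Filter ℝ) :=
    inter_mem hV (iInter_mem.2 fun i => ha i)
  obtain ⟨y, hy1, hy2⟩ := Filter.nonempty_of_mem key
  refine ⟨fun i => y * a i, fun i => ?_, (hhom y (ne_of_gt hy1) a).1 hs⟩
  have := Set.mem_iInter.1 hy2 i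
  simpa [mul_comm] using this

/-- From partition regularity on `(0, ∞)`, produce an iota ultrafilter concentrated
on `(0, ∞)` (for systems with at least one variable). -/
lemma exists_iota {n m : ℕ} {σ : Fin m → MvPolynomial (Fin (n+1)) ℝ}
    (hpr : PartRegOn σ (Ioi 0)) :
    ∃ U : Ultrafilter ℝ, Ioi (0:ℝ) ∈ U ∧ IotaUltra σ U := by
  have hP : PRon σ (Ioi 0) := hpr
  have hPempty : ¬ PRon σ (∅ : Set ℝ) := by
    intro h
    obtain ⟨j, a, ha, -⟩ := h 1 (fun _ => 0)
    exact (ha 0).1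
  let F : Filter ℝ :=
    { sets := {A | ¬ PRon σ (Ioi 0 \ A)}
      univ_sets := by simpa using hPempty
      sets_of_superset := by
        intro A B hA hAB h
        exact hA (PRon_mono (fun x hx => ⟨hx.1, fun hA' => hx.2 (hAB hA')⟩) h)
      inter_sets := by
        intro A B hA hB h
        have h' : PRon σ ((Ioi 0 \ A) ∪ (Ioi 0 \ B)) := by
          rw [← Set.diff_inter]; exact h
        rcases PRon_union h' with h1 | h1
        · exact hA h1
        · exact hB h1 }
  have hne : F.NeBot := by
    rw [Filter.neBot_iff]
    intro hbot
    have h0 : (∅ : Set ℝ) ∈ F := by rw [hbot]; trivial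
    have h1 : ¬ PRon σ (Ioi 0 \ (∅ : Set ℝ)) := h0
    rw [Set.diff_empty] at h1
    exact h1 hP
  obtain ⟨U, hU⟩ := Ultrafilter.exists_le F
  refine ⟨U, ?_, ?_⟩
  · refine hU (show Ioi (0:ℝ) ∈ F from ?_)
    show ¬ PRon σ (Ioi 0 \ Ioi 0)
    rw [Set.diff_self]
    exact hPempty
  · intro A hA
    have hAc : Aᶜ ∉ U := Ultrafilter.compl_notMem_iff.2 hA
    have hAcF : Aᶜ ∉ F := fun h => hAc (hU h)
    have hPA : PRon σ (Ioi 0 \ Aᶜ) := not_not.1 hAcF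
    rw [Set.diff_compl] at hPA
    obtain ⟨j, hj⟩ := hPA 1 (fun _ => 0)
    exact solvableIn_mono (fun x hx => hx.1.2) hj

end AuxLemmas

theorem statement15 {n m : ℕ} (σ : Fin m → MvPolynomial (Fin n) ℝ)
    (hhom : Homogeneous σ) (hpr : PartRegOn σ (Ioi 0))
    (A : Set ℝ) (hA : A ⊆ Ioo 0 1) (hps : PiecewiseSyndeticIn (Ioo 0 1) A) :
    SolvableIn σ A := by
  classical
  open Filter in
  rcases n with - | n
  · -- no variables: any solution works
    obtain ⟨j, a, -, hs⟩ := hpr 1 (fun _ => 0)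
    exact ⟨a, fun i => i.elim0, hs⟩
  -- Step 1: an iota ultrafilter concentrated on (0, ∞)
  obtain ⟨U₀, hU₀pos, hU₀⟩ := exists_iota hpr
  -- Step 2: an ultrafilter converging to 0 from the right
  obtain ⟨V, hV⟩ := Ultrafilter.exists_le (nhdsWithin (0:ℝ) (Ioi 0))
  have hVIoi : Ioi (0:ℝ) ∈ V := hV self_mem_nhdsWithin
  have hVsmall : ∀ ε : ℝ, 0 < ε → Ioo 0 ε ∈ V := fun ε hε =>
    hV (Ioo_mem_nhdsGT_of_mem ⟨le_refl 0, hε⟩)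
  set W := U₀ * V with hWdef
  have hWiota : IotaUltra σ W := iota_mul hhom hU₀ hVIoi
  have hWT : Ioo (0:ℝ) 1 ∈ W := by
    have hev : ∀ᶠ x in (U₀ : Filter ℝ), ∀ᶠ y in (V : Filter ℝ), x * y ∈ Ioo (0:ℝ) 1 := by
      filter_upwards [hU₀pos] with x hx
      have hmem : Ioo (0:ℝ) (min 1 x⁻¹) ∈ V :=
        hVsmall _ (lt_min one_pos (inv_pos.2 hx))
      filter_upwards [hmem] with y hy
      refine ⟨mul_pos hx hy.1, ?_⟩
      have hylt : y < x⁻¹ := lt_of_lt_of_le hy.2 (min_le_right _ _)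
      have h2 : x * y < x * x⁻¹ := mul_lt_mul_of_pos_left hylt hx
      rwa [mul_inv_cancel₀ (ne_of_gt hx)] at h2
    exact (Ultrafilter.eventually_mul U₀ V (· ∈ Ioo (0:ℝ) 1)).2 hev
  -- Step 3: the thickness ultrafilter from piecewise syndeticity
  obtain ⟨G, hGT, hthick⟩ := hps
  set B : Set ℝ := {z | ∃ g ∈ G, g * z ∈ A} with hBdef
  set φ : ℝ → Set ℝ := fun f => {z ∈ Ioo (0:ℝ) 1 | f * z ∈ B} with hφdef
  have hgen : (Filter.generate (φ '' Ioo 0 1)).NeBot := by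
    rw [Filter.generate_neBot_iff]
    intro t hts htfin
    set ψ : Set ℝ → ℝ := fun s =>
      if h : ∃ f ∈ Ioo (0:ℝ) 1, φ f = s then h.choose else 1/2 with hψdef
    have hψ : ∀ s ∈ t, ψ s ∈ Ioo (0:ℝ) 1 ∧ φ (ψ s) = s := by
      intro s hs
      obtain ⟨f, hf, hfs⟩ := hts hs
      have hex : ∃ f ∈ Ioo (0:ℝ) 1, φ f = s := ⟨f, hf, hfs⟩
      simp only [hψdef, dif_pos hex]
      exact ⟨hex.choose_spec.1, hex.choose_spec.2⟩
    set F : Finset ℝ := htfin.toFinset.image ψ with hFdef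
    have hFT : (↑F : Set ℝ) ⊆ Ioo (0:ℝ) 1 := by
      intro f hf
      simp only [hFdef, Finset.coe_image, Set.mem_image,
        Set.Finite.coe_toFinset] at hf
      obtain ⟨s, hs, rfl⟩ := hf
      exact (hψ s hs).1
    obtain ⟨x, hxT, hx⟩ := hthick F hFT
    refine ⟨x, Set.mem_sInter.2 fun s hs => ?_⟩
    have h1 : ψ s ∈ F := by
      rw [hFdef, Finset.mem_image]
      exact ⟨s, htfin.mem_toFinset.2 hs, rfl⟩
    have h2 : x ∈ φ (ψ s) := ⟨hxT, hx (ψ s) h1⟩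
    rwa [(hψ s hs).2] at h2
  haveI := hgen
  obtain ⟨Z, hZ⟩ := Ultrafilter.exists_le (Filter.generate (φ '' Ioo 0 1))
  have hZmem : ∀ f ∈ Ioo (0:ℝ) 1, φ f ∈ Z := fun f hf =>
    hZ (Filter.mem_generate_of_mem ⟨f, hf, rfl⟩)
  have hZT : Ioo (0:ℝ) 1 ∈ Z :=
    Filter.mem_of_superset (hZmem (1/2) (by norm_num)) (fun z hz => hz.1)
  have hZIoi : Ioi (0:ℝ) ∈ Z :=
    Filter.mem_of_superset hZT (fun z hz => hz.1)
  -- Step 4: B belongs to the iota ultrafilter W * Z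
  have hWZiota : IotaUltra σ (W * Z) := iota_mul hhom hWiota hZIoi
  have hBmem : B ∈ W * Z := by
    refine (Ultrafilter.eventually_mul W Z (· ∈ B)).2 ?_
    filter_upwards [hWT] with w hw
    filter_upwards [hZmem w hw] with z hz
    exact hz.2
  -- Step 5: extract a single g ∈ G and a solution
  have hBeq : B = ⋃ g ∈ (G : Set ℝ), {z | g * z ∈ A} := by
    ext z; simp [hBdef]
  obtain ⟨g, hgG, hgmem⟩ :=
    (Ultrafilter.finite_biUnion_mem_iff G.finite_toSet).1 (hBeq ▸ hBmem)
  obtain ⟨a, ha, hs⟩ := hWZiota _ hgmem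
  have hg0 : g ≠ 0 := ne_of_gt (hGT hgG).1
  exact ⟨fun i => g * a i, fun i => ha i, (hhom g hg0 a).1 hs⟩
end

section
/- The equation a + b = cd is partition regular near zero on (0,1): for every ε > 0 and every finite coloring of (0,1), there exist monochromatic a, b, c, d ∈ (0,ε) with a + b = cd. More precisely, every idempotent ultrafilter in the closure of K(β(0,1),⊙) witnesses the partition regularity of a + b − cd = 0. -/
open Set MvPolynomial

attribute [local instance] Ultrafilter.mul

section AuxStatement18
open Filter Topology

attribute [local instance] Ultrafilter.semigroup Ultrafilter.add Ultrafilter.addSemigroup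

/-- A set contains a Schur triple. -/
def SchurSet (A : Set ℝ) : Prop := ∃ a ∈ A, ∃ b ∈ A, a + b ∈ A

/-- Every member of `U` contains a Schur triple. -/
def IotaSchur (U : Ultrafilter ℝ) : Prop := ∀ A ∈ U, SchurSet A

lemma mem_mul_iff {U V : Ultrafilter ℝ} {A : Set ℝ} :
    A ∈ U * V ↔ {x : ℝ | {y : ℝ | x * y ∈ A} ∈ V} ∈ U :=
  (Ultrafilter.eventually_mul U V (· ∈ A))

lemma mem_add_iff {U V : Ultrafilter ℝ} {A : Set ℝ} :
    A ∈ U + V ↔ {x : ℝ | {y : ℝ | x + y ∈ A} ∈ V} ∈ U :=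
  (Ultrafilter.eventually_add U V (· ∈ A))

lemma isClosed_iotaSchur : IsClosed {U : Ultrafilter ℝ | IotaSchur U} := by
  have h : {U : Ultrafilter ℝ | IotaSchur U}
      = ⋂ A ∈ {A : Set ℝ | ¬ SchurSet A}, {U : Ultrafilter ℝ | A ∈ U}ᶜ := by
    ext U
    simp only [Set.mem_iInter, Set.mem_compl_iff, Set.mem_setOf_eq]
    constructor
    · intro h A hA hAU; exact hA (h A hAU)
    · intro h A hAU; by_contra hS; exact h A hS hAU
  rw [h]
  exact isClosed_biInter fun A _ => (ultrafilter_isOpen_basic A).isClosed_compl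

lemma isClosed_le_filter (F : Filter ℝ) :
    IsClosed {U : Ultrafilter ℝ | (U : Filter ℝ) ≤ F} := by
  have h : {U : Ultrafilter ℝ | (U : Filter ℝ) ≤ F}
      = ⋂ s ∈ F.sets, {U : Ultrafilter ℝ | s ∈ U} := by
    ext U
    simp only [Set.mem_iInter, Set.mem_setOf_eq]
    exact ⟨fun h s hs => h hs, fun h s hs => h s hs⟩
  rw [h]
  exact isClosed_biInter fun s _ => ultrafilter_isClosed_basic s

/-- There is an additive idempotent ultrafilter concentrated near `0⁺`;
it witnesses Schur triples in all of its members. -/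
lemma exists_iotaSchur_nearZero :
    ∃ W : Ultrafilter ℝ, (W : Filter ℝ) ≤ 𝓝[>] (0 : ℝ) ∧ IotaSchur W := by
  have hcl : IsClosed {W : Ultrafilter ℝ | (W : Filter ℝ) ≤ 𝓝[>] (0 : ℝ)} :=
    isClosed_le_filter _
  have hne : {W : Ultrafilter ℝ | (W : Filter ℝ) ≤ 𝓝[>] (0 : ℝ)}.Nonempty := by
    obtain ⟨W, hW⟩ := Ultrafilter.exists_le (𝓝[>] (0 : ℝ))
    exact ⟨W, hW⟩
  have hadd : ∀ W1 ∈ {W : Ultrafilter ℝ | (W : Filter ℝ) ≤ 𝓝[>] (0 : ℝ)},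
      ∀ W2 ∈ {W : Ultrafilter ℝ | (W : Filter ℝ) ≤ 𝓝[>] (0 : ℝ)},
      W1 + W2 ∈ {W : Ultrafilter ℝ | (W : Filter ℝ) ≤ 𝓝[>] (0 : ℝ)} := by
    intro W1 h1 W2 h2
    intro s hs
    obtain ⟨ε, hε, hsub⟩ := (nhdsGT_basis (0 : ℝ)).mem_iff.mp hs
    rw [Ultrafilter.mem_coe, mem_add_iff]
    have h1' : Ioo (0 : ℝ) (ε / 2) ∈ W1 := h1 (Ioo_mem_nhdsGT (by linarith))
    have h2' : Ioo (0 : ℝ) (ε / 2) ∈ W2 := h2 (Ioo_mem_nhdsGT (by linarith))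
    refine mem_of_superset h1' fun x hx => ?_
    refine mem_of_superset h2' fun y hy => ?_
    exact hsub ⟨by nlinarith [hx.1, hy.1], by nlinarith [hx.2, hy.2]⟩
  obtain ⟨W, hWmem, hWidem⟩ :=
    exists_idempotent_in_compact_add_subsemigroup
      (fun r : Ultrafilter ℝ => Ultrafilter.continuous_add_left r) _ hne
      hcl.isCompact hadd
  refine ⟨W, hWmem, ?_⟩
  intro A hA
  have hA2 : {x : ℝ | {y : ℝ | x + y ∈ A} ∈ W} ∈ W := by
    rw [← mem_add_iff, hWidem]; exact hA
  obtain ⟨a, haA, haS⟩ := W.nonempty_of_mem (inter_mem hA hA2)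
  obtain ⟨b, hbA, hbS⟩ := W.nonempty_of_mem (inter_mem hA haS)
  exact ⟨a, haA, b, hbA, hbS⟩

lemma iotaSchur_mul_right {U V : Ultrafilter ℝ} (hU : IotaSchur U) : IotaSchur (U * V) := by
  intro A hA
  rw [mem_mul_iff] at hA
  obtain ⟨a, haU, b, hbU, habU⟩ := hU _ hA
  obtain ⟨y, ⟨hy1, hy2⟩, hy3⟩ :=
    V.nonempty_of_mem (inter_mem (inter_mem haU hbU) habU)
  refine ⟨a * y, hy1, b * y, hy2, ?_⟩
  have h : a * y + b * y = (a + b) * y := by ring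
  rw [h]; exact hy3

lemma iotaSchur_mul_left {U V : Ultrafilter ℝ} (hU : IotaSchur U) : IotaSchur (V * U) := by
  intro A hA
  rw [mem_mul_iff] at hA
  obtain ⟨x, hx⟩ := V.nonempty_of_mem hA
  obtain ⟨a, ha, b, hb, hab⟩ := hU _ hx
  refine ⟨x * a, ha, x * b, hb, ?_⟩
  have h : x * a + x * b = x * (a + b) := by ring
  rw [h]; exact hab

lemma Ioo01_mul_closed : ∀ x ∈ Ioo (0 : ℝ) 1, ∀ y ∈ Ioo (0 : ℝ) 1, x * y ∈ Ioo (0 : ℝ) 1 := by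
  intro x hx y hy
  exact ⟨mul_pos hx.1 hy.1, by nlinarith [hx.2, hy.2, hx.1, hy.1]⟩

lemma beta_mul {U V : Ultrafilter ℝ} (hU : U ∈ beta (Ioo 0 1)) (hV : V ∈ beta (Ioo 0 1)) :
    U * V ∈ beta (Ioo 0 1) := by
  show Ioo (0 : ℝ) 1 ∈ U * V
  rw [mem_mul_iff]
  refine mem_of_superset hU fun x hx => ?_
  exact mem_of_superset hV fun y hy => Ioo01_mul_closed x hx y hy

/-- The set of `IotaSchur` ultrafilters on `(0,1)` is a two-sided ideal. -/
lemma isIdeal_iotaSchur :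
    IsIdealIn (Ioo 0 1) (beta (Ioo 0 1) ∩ {U : Ultrafilter ℝ | IotaSchur U}) := by
  refine ⟨?_, Set.inter_subset_left, ?_⟩
  · obtain ⟨W, hW1, hW2⟩ := exists_iotaSchur_nearZero
    exact ⟨W, hW1 (Ioo_mem_nhdsGT one_pos), hW2⟩
  · rintro U ⟨hUb, hUi⟩ V hVb
    exact ⟨⟨beta_mul hUb hVb, iotaSchur_mul_right hUi⟩,
      ⟨beta_mul hVb hUb, iotaSchur_mul_left hUi⟩⟩

/-- The key combination: an idempotent `IotaSchur` ultrafilter witnesses `a + b = x * y`. -/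
lemma combine {U : Ultrafilter ℝ} (hI : IotaSchur U) (hU : U * U = U)
    {A : Set ℝ} (hA : A ∈ U) :
    ∃ a ∈ A, ∃ b ∈ A, ∃ x ∈ A, ∃ y ∈ A, a + b = x * y := by
  have h1 : {x : ℝ | {y : ℝ | x * y ∈ A} ∈ U} ∈ U := by
    rw [← mem_mul_iff, hU]; exact hA
  obtain ⟨y, hyA, hyS⟩ := U.nonempty_of_mem (inter_mem hA h1)
  have hB : A ∩ {z : ℝ | y * z ∈ A} ∈ U := inter_mem hA hyS
  obtain ⟨a', ⟨ha'A, ha'⟩, b', ⟨hb'A, hb'⟩, hsum⟩ := hI _ hB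
  refine ⟨y * a', ha', y * b', hb', a' + b', hsum.1, y, hyA, by ring⟩

lemma exists_good_idem :
    ∃ U : Ultrafilter ℝ, (U : Filter ℝ) ≤ 𝓝[>] (0 : ℝ) ∧ IotaSchur U ∧ U * U = U := by
  set C := {U : Ultrafilter ℝ | (U : Filter ℝ) ≤ 𝓝[>] (0 : ℝ)} ∩
    {U : Ultrafilter ℝ | IotaSchur U} with hC
  have hclosed : IsClosed C := (isClosed_le_filter _).inter isClosed_iotaSchur
  have hne : C.Nonempty := by
    obtain ⟨W, h1, h2⟩ := exists_iotaSchur_nearZero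
    exact ⟨W, h1, h2⟩
  have hmul : ∀ U ∈ C, ∀ V ∈ C, U * V ∈ C := by
    rintro U ⟨hU1, hU2⟩ V ⟨hV1, hV2⟩
    refine ⟨?_, iotaSchur_mul_right hU2⟩
    intro s hs
    obtain ⟨ε, hε, hsub⟩ := (nhdsGT_basis (0 : ℝ)).mem_iff.mp hs
    rw [Ultrafilter.mem_coe, mem_mul_iff]
    have h1' : Ioo (0 : ℝ) ε ∈ U := hU1 (Ioo_mem_nhdsGT hε)
    have h2' : Ioo (0 : ℝ) 1 ∈ V := hV1 (Ioo_mem_nhdsGT one_pos)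
    refine mem_of_superset h1' fun x hx => ?_
    refine mem_of_superset h2' fun y hy => ?_
    exact hsub ⟨mul_pos hx.1 hy.1, by nlinarith [hx.2, hy.2, hx.1, hy.1]⟩
  obtain ⟨U, hUC, hidem⟩ :=
    exists_idempotent_in_compact_subsemigroup
      (fun r : Ultrafilter ℝ => Ultrafilter.continuous_mul_left r) C hne
      hclosed.isCompact hmul
  exact ⟨U, hUC.1, hUC.2, hidem⟩

end AuxStatement18

theorem statement18 :
    (∀ ε : ℝ, 0 < ε → ∀ (k : ℕ) (c : ℝ → Fin k), ∃ j : Fin k,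
      ∃ a ∈ {t ∈ Ioo (0 : ℝ) 1 | c t = j ∧ t < ε}, ∃ b ∈ {t ∈ Ioo (0 : ℝ) 1 | c t = j ∧ t < ε},
      ∃ x ∈ {t ∈ Ioo (0 : ℝ) 1 | c t = j ∧ t < ε}, ∃ y ∈ {t ∈ Ioo (0 : ℝ) 1 | c t = j ∧ t < ε},
        a + b = x * y) ∧
    (∀ U : Ultrafilter ℝ, U ∈ closure (K (Ioo 0 1)) → U * U = U →
      ∀ A ∈ U, ∃ a ∈ A, ∃ b ∈ A, ∃ x ∈ A, ∃ y ∈ A, a + b = x * y) := by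
  obtain ⟨U0, hU0le, hU0i, hU0idem⟩ := exists_good_idem
  constructor
  · intro ε hε k c
    have hm : (0 : ℝ) < min ε 1 := lt_min hε one_pos
    have hIoo : Ioo (0 : ℝ) (min ε 1) ∈ U0 := hU0le (Ioo_mem_nhdsGT hm)
    have hsub : Ioo (0 : ℝ) (min ε 1) ⊆
        ⋃ j ∈ (Set.univ : Set (Fin k)), {t ∈ Ioo (0 : ℝ) 1 | c t = j ∧ t < ε} := by
      intro t ht
      refine Set.mem_biUnion (Set.mem_univ (c t)) ?_
      exact ⟨⟨ht.1, lt_of_lt_of_le ht.2 (min_le_right _ _)⟩, rfl,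
        lt_of_lt_of_le ht.2 (min_le_left _ _)⟩
    have hUnion : (⋃ j ∈ (Set.univ : Set (Fin k)), {t ∈ Ioo (0 : ℝ) 1 | c t = j ∧ t < ε}) ∈ U0 :=
      Filter.mem_of_superset hIoo hsub
    obtain ⟨j, -, hj⟩ := (Ultrafilter.finite_biUnion_mem_iff (Set.finite_univ)).mp hUnion
    exact ⟨j, combine hU0i hU0idem hj⟩
  · intro U hUcl hUidem A hA
    have hJ : U ∈ beta (Ioo 0 1) ∩ {V : Ultrafilter ℝ | IotaSchur V} := by
      have hKJ : K (Ioo 0 1) ⊆ beta (Ioo 0 1) ∩ {V : Ultrafilter ℝ | IotaSchur V} :=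
        Set.sInter_subset_of_mem isIdeal_iotaSchur
      have hclosed : IsClosed (beta (Ioo 0 1) ∩ {V : Ultrafilter ℝ | IotaSchur V}) :=
        (ultrafilter_isClosed_basic (Ioo (0 : ℝ) 1)).inter isClosed_iotaSchur
      exact (hclosed.closure_subset_iff.mpr hKJ) hUcl
    exact combine hJ.2 hUidem hA
end
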